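/- Let 0 < p₀ ≤ p₁ ≤ 1 and let Φ : (0,∞) → (0,∞) be a strictly increasing continuous bijection of type (p₀, p₁), i.e. Φ(st) ≤ C t^{p₀} Φ(s) for t ∈ (0,1] and Φ(st) ≤ C t^{p₁} Φ(s) for t ∈ [1,∞), for all s > 0. Define ρ(t) = t⁻¹/Φ⁻¹(t⁻¹). Then ρ is of upper type 1/p₀ − 1, i.e., there is a constant C' > 0 such that ρ(st) ≤ C' t^{1/p₀ − 1} ρ(s) for all t ∈ [1,∞) and s ∈ (0,∞). -/

import Mathlib

open Real

/-!
Write `a = Φinv x` and `λ = (C t)^{1/p₀} ≥ 1`. The lower type applied at `λ a` with factor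
`λ⁻¹` gives `C t · Φ a ≤ C · Φ (λ a)`, i.e. `t x ≤ Φ (λ a)`, so `Φinv (t x) ≤ λ · Φinv x`:
`Φinv` has upper type `1/p₀`. Since `ρ u = u⁻¹ / Φinv u⁻¹`, this is exactly the upper type
`1/p₀ - 1` of `ρ`.
-/

section LowerType

variable {Φ Φinv : ℝ → ℝ} {p₀ C : ℝ}

theorem one_le_of_lowerType
    (hlow : ∀ t, 0 < t → t ≤ 1 → ∀ s, 0 < s → Φ (s * t) ≤ C * t ^ p₀ * Φ s)
    {u : ℝ} (hu : 0 < u) (hΦu : 0 < Φ u) : 1 ≤ C := by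
  have h := hlow 1 one_pos le_rfl u hu
  rw [mul_one, one_rpow, mul_one] at h
  exact (le_mul_iff_one_le_left hΦu).mp h

theorem rpow_mul_le_mul_apply_mul_of_lowerType
    (hlow : ∀ t, 0 < t → t ≤ 1 → ∀ s, 0 < s → Φ (s * t) ≤ C * t ^ p₀ * Φ s)
    {l a : ℝ} (hl : 1 ≤ l) (ha : 0 < a) : l ^ p₀ * Φ a ≤ C * Φ (l * a) := by
  have hl₀ : 0 < l := one_pos.trans_le hl
  have h := hlow l⁻¹ (inv_pos.mpr hl₀) (inv_le_one_of_one_le₀ hl) (l * a) (by positivity)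
  rw [show l * a * l⁻¹ = a by field_simp, inv_rpow hl₀.le] at h
  have hlp : 0 < l ^ p₀ := rpow_pos_of_pos hl₀ p₀
  calc l ^ p₀ * Φ a ≤ l ^ p₀ * (C * (l ^ p₀)⁻¹ * Φ (l * a)) := by gcongr
    _ = C * Φ (l * a) := by field_simp

theorem inv_apply_mul_le_of_lowerType (hp₀ : 0 < p₀) (hC : 1 ≤ C)
    (hinvpos : ∀ t, 0 < t → 0 < Φinv t) (hmono : StrictMonoOn Φ (Set.Ioi 0))
    (hright : ∀ t, 0 < t → Φ (Φinv t) = t)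
    (hlow : ∀ t, 0 < t → t ≤ 1 → ∀ s, 0 < s → Φ (s * t) ≤ C * t ^ p₀ * Φ s)
    {t x : ℝ} (ht : 1 ≤ t) (hx : 0 < x) : Φinv (t * x) ≤ (C * t) ^ (1 / p₀) * Φinv x := by
  have hCt : 1 ≤ C * t := one_le_mul_of_one_le_of_one_le hC ht
  set l := (C * t) ^ (1 / p₀)
  have hl : 1 ≤ l := one_le_rpow hCt (by positivity)
  have hlp : l ^ p₀ = C * t := by
    rw [← rpow_mul (by positivity), one_div_mul_cancel hp₀.ne', rpow_one]
  have ha : 0 < Φinv x := hinvpos x hx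
  have hkey := rpow_mul_le_mul_apply_mul_of_lowerType hlow hl ha
  rw [hlp, hright x hx, mul_assoc] at hkey
  have htx : Φ (Φinv (t * x)) ≤ Φ (l * Φinv x) := by
    rw [hright _ (by positivity)]
    exact le_of_mul_le_mul_left hkey (by positivity)
  have hla : (0 : ℝ) < l * Φinv x := by positivity
  exact (hmono.le_iff_le (hinvpos _ (by positivity)) hla).mp htx

end LowerType

theorem stmt6_general (Φ Φinv : ℝ → ℝ) (p₀ C : ℝ)
    (hp₀ : 0 < p₀)
    (hinvpos : ∀ t, 0 < t → 0 < Φinv t)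
    (hmono : StrictMonoOn Φ (Set.Ioi 0))
    (hright : ∀ t, 0 < t → Φ (Φinv t) = t)
    (hlow : ∀ t, 0 < t → t ≤ 1 → ∀ s, 0 < s → Φ (s * t) ≤ C * t ^ p₀ * Φ s) :
    ∃ C' : ℝ, 0 < C' ∧ ∀ t, 1 ≤ t → ∀ s, 0 < s →
      (s * t)⁻¹ / Φinv (s * t)⁻¹ ≤ C' * t ^ (1 / p₀ - 1) * (s⁻¹ / Φinv s⁻¹) := by
  have hC : 1 ≤ C :=
    one_le_of_lowerType hlow (hinvpos 1 one_pos) (by rw [hright 1 one_pos]; exact one_pos)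
  refine ⟨C ^ (1 / p₀), rpow_pos_of_pos (one_pos.trans_le hC) _, fun t ht s hs => ?_⟩
  have ht₀ : 0 < t := one_pos.trans_le ht
  set x := (s * t)⁻¹
  have hx : 0 < x := by positivity
  have hsx : s⁻¹ = t * x := by simp only [x]; field_simp
  have hb := inv_apply_mul_le_of_lowerType hp₀ hC hinvpos hmono hright hlow ht hx
  have hΦinvs : 0 < Φinv s⁻¹ := hinvpos _ (by positivity)
  calc x / Φinv x = (C * t) ^ (1 / p₀) * x / ((C * t) ^ (1 / p₀) * Φinv x) := by
        rw [mul_div_mul_left _ _ (by positivity)]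
    _ ≤ (C * t) ^ (1 / p₀) * x / Φinv s⁻¹ := by
        rw [hsx] at hΦinvs ⊢
        gcongr
    _ = C ^ (1 / p₀) * t ^ (1 / p₀ - 1) * (s⁻¹ / Φinv s⁻¹) := by
        rw [mul_rpow (by linarith) ht₀.le, rpow_sub_one ht₀.ne', hsx]
        field_simp

/-- Let `0 < p₀ ≤ p₁ ≤ 1` and let `Φ : (0,∞) → (0,∞)` be a strictly increasing continuous
bijection (with two-sided inverse `Φinv`) of type `(p₀, p₁)`, i.e. `Φ (s*t) ≤ C t^{p₀} Φ s`
for `t ∈ (0,1]` and `Φ (s*t) ≤ C t^{p₁} Φ s` for `t ∈ [1,∞)`, for all `s > 0`. Let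
`ρ t = t⁻¹ / Φinv t⁻¹`. Then `ρ` is of upper type `1/p₀ - 1`: there is `C' > 0` with
`ρ (s*t) ≤ C' * t^(1/p₀ - 1) * ρ s` for all `t ∈ [1,∞)` and `s ∈ (0,∞)`. -/
theorem stmt6 (Φ Φinv : ℝ → ℝ) (p₀ p₁ C : ℝ)
    (hp₀ : 0 < p₀) (hp₀₁ : p₀ ≤ p₁) (hp₁ : p₁ ≤ 1) (hC : 0 < C)
    (hpos : ∀ t, 0 < t → 0 < Φ t) (hinvpos : ∀ t, 0 < t → 0 < Φinv t)
    (hmono : StrictMonoOn Φ (Set.Ioi 0)) (hcont : ContinuousOn Φ (Set.Ioi 0))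
    (hleft : ∀ t, 0 < t → Φinv (Φ t) = t) (hright : ∀ t, 0 < t → Φ (Φinv t) = t)
    (hlow : ∀ t, 0 < t → t ≤ 1 → ∀ s, 0 < s → Φ (s * t) ≤ C * t ^ p₀ * Φ s)
    (hup : ∀ t, 1 ≤ t → ∀ s, 0 < s → Φ (s * t) ≤ C * t ^ p₁ * Φ s) :
    ∃ C' : ℝ, 0 < C' ∧ ∀ t, 1 ≤ t → ∀ s, 0 < s →
      (s * t)⁻¹ / Φinv (s * t)⁻¹ ≤ C' * t ^ (1 / p₀ - 1) * (s⁻¹ / Φinv s⁻¹) :=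
  stmt6_general Φ Φinv p₀ C hp₀ hinvpos hmono hright hlow
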